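/- arXiv:1509.02002 — 2 statements merged into one kernel-verified Lean document; each statement's English description precedes it below -/
import Mathlib

section
/- Suppose sequences {u_k}, {v_k} satisfy the coupled recurrences A v_k = γ_k u_{k+1} + α_k u_k + β_{k-1} u_{k-1} and A' u_k = β_k v_{k+1} + α_k v_k + γ_{k-1} v_{k-1}, with α_k = u_k'Av_k, u_{k+1}, v_{k+1} unit vectors, γ_k, β_k ≠ 0, and suppose v_1,...,v_k and u_1,...,u_k are each orthonormal. Then u_{k+1}'u_k = 0. -/
open Matrix

/-- Induction step for the tridiagonalization: u_{k+1}'u_k = 0. -/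
theorem stmt7 (n : ℕ) (A : Matrix (Fin n) (Fin n) ℝ)
    (u v : ℕ → (Fin n → ℝ)) (α β γ : ℕ → ℝ) (k : ℕ) (hk : 1 ≤ k)
    (hβ0 : β 0 = 0) (hγ0 : γ 0 = 0) (hu0 : u 0 = 0) (hv0 : v 0 = 0)
    (hrec1 : A *ᵥ v k = γ k • u (k + 1) + α k • u k + β (k - 1) • u (k - 1))
    (hrec2 : Aᵀ *ᵥ u k = β k • v (k + 1) + α k • v k + γ (k - 1) • v (k - 1))
    (hα : α k = u k ⬝ᵥ (A *ᵥ v k))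
    (hunit_u : u (k + 1) ⬝ᵥ u (k + 1) = 1) (hunit_v : v (k + 1) ⬝ᵥ v (k + 1) = 1)
    (hγ : γ k ≠ 0) (hβ : β k ≠ 0)
    (horthu : ∀ i j, 1 ≤ i → i ≤ k → 1 ≤ j → j ≤ k →
      u i ⬝ᵥ u j = if i = j then 1 else 0)
    (horthv : ∀ i j, 1 ≤ i → i ≤ k → 1 ≤ j → j ≤ k →
      v i ⬝ᵥ v j = if i = j then 1 else 0) :
    u (k + 1) ⬝ᵥ u k = 0 := by
  have hkk : u k ⬝ᵥ u k = 1 := by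
    have := horthu k k hk le_rfl hk le_rfl; simpa using this
  have hprev : β (k - 1) * (u k ⬝ᵥ u (k - 1)) = 0 := by
    rcases eq_or_lt_of_le hk with h1 | h2
    · simp [← h1, hβ0]
    · have hk1 : 1 ≤ k - 1 := by omega
      have hne : k ≠ k - 1 := by omega
      rw [horthu k (k-1) hk le_rfl hk1 (by omega), if_neg hne, mul_zero]
  have h := congrArg (fun w => u k ⬝ᵥ w) hrec1
  simp only [dotProduct_add, dotProduct_smul, smul_eq_mul] at h
  rw [← hα, hkk, mul_one] at h
  rw [hprev, add_zero] at h
  have hzero : γ k * (u k ⬝ᵥ u (k + 1)) = 0 := by linarith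
  have : u k ⬝ᵥ u (k + 1) = 0 := by
    rcases mul_eq_zero.mp hzero with h' | h'
    · exact absurd h' hγ
    · exact h'
  rw [dotProduct_comm]; exact this
end

section
/- Suppose {u_i}, {v_i} satisfy the bidiagonalization recurrences A v_{k+1} = α_{k+1} u_{k+1} + β_k u_k and A' u_i = β_i v_{i+1} + α_i v_i, with v_1,...,v_{k+1} orthonormal and u_1,...,u_k orthonormal, and α_{k+1} ≠ 0. Then u_{k+1} := (Av_{k+1} − β_k u_k)/α_{k+1} satisfies u_{k+1}'u_i = 0 for all i ≤ k. -/
open Matrix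

/-- Induction step of orthogonality for the bidiagonalization:
u_{k+1}'u_i = 0 for all i ≤ k. -/
theorem stmt11 (n : ℕ) (A : Matrix (Fin n) (Fin n) ℝ)
    (u v : ℕ → (Fin n → ℝ)) (α β : ℕ → ℝ) (k : ℕ)
    (hrec1 : A *ᵥ v (k + 1) = α (k + 1) • u (k + 1) + β k • u k)
    (hrec2 : ∀ i, 1 ≤ i → i ≤ k → Aᵀ *ᵥ u i = β i • v (i + 1) + α i • v i)
    (horthv : ∀ i j, 1 ≤ i → i ≤ k + 1 → 1 ≤ j → j ≤ k + 1 →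
      v i ⬝ᵥ v j = if i = j then 1 else 0)
    (horthu : ∀ i j, 1 ≤ i → i ≤ k → 1 ≤ j → j ≤ k →
      u i ⬝ᵥ u j = if i = j then 1 else 0)
    (hα : α (k + 1) ≠ 0)
    (hu : u (k + 1) = (α (k + 1))⁻¹ • (A *ᵥ v (k + 1) - β k • u k)) :
    ∀ i, 1 ≤ i → i ≤ k → u (k + 1) ⬝ᵥ u i = 0 := by
  intro i hi1 hik
  have hAv : (A *ᵥ v (k + 1)) ⬝ᵥ u i = β i * (if k = i then 1 else 0) := by
    have h1 : v (k + 1) ⬝ᵥ (Aᵀ *ᵥ u i) = (A *ᵥ v (k + 1)) ⬝ᵥ u i := by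
      rw [dotProduct_mulVec, vecMul_transpose]
    rw [← h1, hrec2 i hi1 hik, dotProduct_add, dotProduct_smul, dotProduct_smul,
      horthv (k+1) (i+1) (by omega) le_rfl (by omega) (by omega),
      horthv (k+1) i (by omega) le_rfl hi1 (by omega)]
    have : ¬ (k + 1 = i) := by omega
    simp [this]
  have huki : u k ⬝ᵥ u i = if k = i then 1 else 0 :=
    horthu k i (by omega) le_rfl hi1 hik
  rw [hu]
  rw [smul_dotProduct, sub_dotProduct, smul_dotProduct, hAv, huki]
  by_cases h : k = i <;> simp [h, smul_eq_mul]
end
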